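/- arXiv:2211.11400 — 6 statements merged into one kernel-verified Lean document; each statement's English description precedes it below -/
import Mathlib

section
/- Let (φ_i)_{i∈ℕ} be a multiple test (each φ_i : Ω → {0,1}) with strong FWER control: P(∃ i ∈ I_0 : φ_i = 1) ≤ α. Define φ_I = 1 if and only if there exists i ∈ I with φ_i = 1. Then: (a) (φ_I)_{I⊆ℕ} is a family of α-level intersection tests, i.e., P(φ_I = 1) ≤ α whenever I ⊆ I_0; (b) (φ_I)_{I⊆ℕ} is predictable, indeed monotone: φ_I = 1 and I ⊆ K imply φ_K = 1; and (c) the closed procedure defined by (φ_I) rejects H_i if and only if φ_i = 1. -/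
open MeasureTheory ENNReal

theorem stmt3 {Ω : Type*} [MeasurableSpace Ω] (μ : Measure Ω) [IsProbabilityMeasure μ]
    (α : ℝ≥0∞) (φ : ℕ → Ω → Prop) (I0 : Set ℕ)
    (hFWER : μ {ω | ∃ i ∈ I0, φ i ω} ≤ α) :
    (∀ I : Set ℕ, I ⊆ I0 → μ {ω | ∃ i ∈ I, φ i ω} ≤ α) ∧
    (∀ (I K : Set ℕ) (ω : Ω), I ⊆ K → (∃ i ∈ I, φ i ω) → (∃ i ∈ K, φ i ω)) ∧
    (∀ (i : ℕ) (ω : Ω), (∀ K : Set ℕ, i ∈ K → ∃ j ∈ K, φ j ω) ↔ φ i ω) := by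
  refine ⟨fun I hI => le_trans (measure_mono ?_) hFWER,
    fun I K ω hIK ⟨i, hi, hφ⟩ => ⟨i, hIK hi, hφ⟩, fun i ω => ?_⟩
  · rintro ω ⟨i, hi, hφ⟩; exact ⟨i, hI hi, hφ⟩
  · constructor
    · intro h
      obtain ⟨j, hj, hφ⟩ := h {i} rfl
      rwa [Set.mem_singleton_iff.mp hj] at hφ
    · intro h K hK; exact ⟨i, hK, h⟩
end

section
/- (Lemma on short-cut adjustment.) Let (α_i^I) be a predictable family of significance-level assignments with induced intersection tests φ_I = 1 iff ∃ j ∈ I : P_j ≤ α_j^I. Define recursively I_1 = {1} and I_i = {j < i : P_j > α_j^{I_j}} ∪ {i} for i ≥ 2. Then for all i ∈ ℕ: φ_{I_i} = 1 if and only if P_i ≤ α_i^{I_i}. -/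
theorem stmt7 (P : ℕ → ℝ) (a : Set ℕ → ℕ → ℝ)
    (hpred : ∀ (i : ℕ) (I : Set ℕ), (∀ j ∈ I, j ≤ i) →
      ∀ J : Set ℕ, (∀ j ∈ J, i < j) → ∀ j ∈ I, a I j = a (I ∪ J) j)
    (Iseq : ℕ → Set ℕ) (h1 : Iseq 1 = {1})
    (hrec : ∀ i ≥ 2, Iseq i = {j | 1 ≤ j ∧ j < i ∧ a (Iseq j) j < P j} ∪ {i}) :
    ∀ i ≥ 1, (∃ j ∈ Iseq i, P j ≤ a (Iseq i) j) ↔ P i ≤ a (Iseq i) i := by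
  have hmem : ∀ i ≥ 1, i ∈ Iseq i := by
    intro i hi
    rcases eq_or_lt_of_le hi with h | h
    · rw [← h, h1]; rfl
    · rw [hrec i h]; right; rfl
  have hle : ∀ i ≥ 1, ∀ k ∈ Iseq i, 1 ≤ k ∧ k ≤ i := by
    intro i hi k hk
    rcases eq_or_lt_of_le hi with h | h
    · rw [← h, h1] at hk
      simp only [Set.mem_singleton_iff] at hk
      omega
    · rw [hrec i h] at hk
      rcases hk with ⟨h1k, h2k, _⟩ | hk
      · omega
      · simp only [Set.mem_singleton_iff] at hk; omega
  intro i hi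
  constructor
  · rintro ⟨j, hj, hPj⟩
    by_contra hPi
    have hji : j ≠ i := fun h => hPi (h ▸ hPj)
    have hi2 : 2 ≤ i := by
      rcases eq_or_lt_of_le hi with h | h
      · exfalso
        rw [← h, h1] at hj
        simp only [Set.mem_singleton_iff] at hj
        omega
      · omega
    rw [hrec i hi2] at hj
    rcases hj with ⟨hj1, hj2, hj3⟩ | hj
    · -- j was "accepted": a (Iseq j) j < P j
      have hIeq : Iseq i = Iseq j ∪ {k | k ∈ Iseq i ∧ j < k} := by
        ext k
        constructor
        · intro hk
          by_cases hkj : j < k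
          · right; exact ⟨hk, hkj⟩
          · left
            push_neg at hkj
            have hk1 := hle i hi k hk
            rcases eq_or_lt_of_le (show 1 ≤ k from hk1.1) with hk' | hk'
            · -- k = 1 ≤ j
              rcases Nat.lt_or_ge k j with hlt | hge
              · -- k < j, so j ≥ 2
                have hj2' : 2 ≤ j := by omega
                rw [hrec j hj2']
                rw [hrec i hi2] at hk
                rcases hk with ⟨ha, hb, hc⟩ | hk
                · left; exact ⟨ha, by omega, hc⟩
                · simp only [Set.mem_singleton_iff] at hk; omega
              · have : k = j := by omega
                rw [this]; exact hmem j hj1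
            · rcases Nat.lt_or_ge k j with hlt | hge
              · have hj2' : 2 ≤ j := by omega
                rw [hrec j hj2']
                rw [hrec i hi2] at hk
                rcases hk with ⟨ha, hb, hc⟩ | hk
                · left; exact ⟨ha, by omega, hc⟩
                · simp only [Set.mem_singleton_iff] at hk; omega
              · have : k = j := by omega
                rw [this]; exact hmem j hj1
        · rintro (hk | ⟨hk, _⟩)
          · rcases eq_or_lt_of_le hj1 with hj' | hj'
            · subst hj'
              rw [h1] at hk
              simp only [Set.mem_singleton_iff] at hk
              subst hk
              rw [hrec i hi2]
              left
              exact ⟨le_refl 1, hj2, hj3⟩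
            · rw [hrec j hj'] at hk
              rw [hrec i hi2]
              rcases hk with ⟨ha, hb, hc⟩ | hk
              · left; exact ⟨ha, by omega, hc⟩
              · simp only [Set.mem_singleton_iff] at hk
                left; rw [hk]; exact ⟨hj1, hj2, hj3⟩
          · exact hk
      have haeq : a (Iseq j) j = a (Iseq i) j := by
        have := hpred j (Iseq j) (fun k hk => (hle j hj1 k hk).2)
          {k | k ∈ Iseq i ∧ j < k} (fun k hk => hk.2) j (hmem j hj1)
        rw [this, ← hIeq]
      rw [← haeq] at hPj
      linarith
    · simp only [Set.mem_singleton_iff] at hj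
      exact hji hj
  · intro h
    exact ⟨i, hmem i hi, h⟩
end

section
/- The consonance property can fail for Alpha-Spending intersection tests when (γ_i) is not non-increasing: take γ = (0,1,0,0,...). If P_2 ≤ α (with α > 0) then φ_{{1,2}} = 1 but φ_{{1}} = 0 and φ_{{2}} = 0 whenever P_1 > 0 and P_2 > 0; hence there is no i ∈ {1,2} with φ_J = 1 for all J ⊆ {1,2} containing i. -/
lemma aux_set12 : {k ∈ ({1, 2} : Set ℕ) | k ≤ 2} = ({1, 2} : Set ℕ) := by
  ext k; simp only [Set.mem_setOf_eq, Set.mem_insert_iff, Set.mem_singleton_iff]; omega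

lemma aux_sing (a i : ℕ) (h : a ≤ i) : {k ∈ ({a} : Set ℕ) | k ≤ i} = ({a} : Set ℕ) := by
  ext k; simp only [Set.mem_setOf_eq, Set.mem_singleton_iff]
  constructor
  · rintro ⟨rfl, _⟩; rfl
  · rintro rfl; exact ⟨rfl, h⟩

theorem stmt10 (α : ℝ) (hα : 0 < α) (γ : ℕ → ℝ) (hγ1 : γ 1 = 0) (hγ2 : γ 2 = 1)
    (P : ℕ → ℝ) (hP1 : 0 < P 1) (hP2 : 0 < P 2) (h2 : P 2 ≤ α) :
    (∃ i ∈ ({1, 2} : Set ℕ), P i ≤ α * γ ({k ∈ ({1, 2} : Set ℕ) | k ≤ i}.ncard)) ∧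
    ¬ (∃ i ∈ ({1} : Set ℕ), P i ≤ α * γ ({k ∈ ({1} : Set ℕ) | k ≤ i}.ncard)) ∧
    ¬ (∃ i ∈ ({2} : Set ℕ), P i ≤ α * γ ({k ∈ ({2} : Set ℕ) | k ≤ i}.ncard)) ∧
    ¬ (∃ i ∈ ({1, 2} : Set ℕ), ∀ J ⊆ ({1, 2} : Set ℕ), i ∈ J →
        ∃ m ∈ J, P m ≤ α * γ ({k ∈ J | k ≤ m}.ncard)) := by
  have hcard12 : ({1, 2} : Set ℕ).ncard = 2 := Set.ncard_pair (by norm_num)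
  have not1 : ¬ (∃ i ∈ ({1} : Set ℕ), P i ≤ α * γ ({k ∈ ({1} : Set ℕ) | k ≤ i}.ncard)) := by
    rintro ⟨i, hi, hle⟩
    rw [Set.mem_singleton_iff] at hi; subst hi
    rw [aux_sing 1 1 le_rfl, Set.ncard_singleton, hγ1, mul_zero] at hle
    exact absurd hle (not_le.mpr hP1)
  have not2 : ¬ (∃ i ∈ ({2} : Set ℕ), P i ≤ α * γ ({k ∈ ({2} : Set ℕ) | k ≤ i}.ncard)) := by
    rintro ⟨i, hi, hle⟩
    rw [Set.mem_singleton_iff] at hi; subst hi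
    rw [aux_sing 2 2 le_rfl, Set.ncard_singleton, hγ1, mul_zero] at hle
    exact absurd hle (not_le.mpr hP2)
  refine ⟨⟨2, by simp, ?_⟩, not1, not2, ?_⟩
  · rw [aux_set12, hcard12, hγ2, mul_one]; exact h2
  · rintro ⟨i, hi, hall⟩
    rcases hi with hi | hi
    · exact not1 (hall {1} (by simp) (by simp [hi]))
    · exact not2 (hall {2} (by simp) (by simp [hi]))
end

section
/- The closed Alpha-Spending procedure uniformly improves the Alpha-Spending procedure: if (γ_i)_{i∈ℕ} is non-increasing and non-negative with Σγ_i ≤ 1, then for every realization of p-values (P_i) and every i ∈ ℕ, α·γ_{t(i)} ≥ α·γ_i, where t(i) = 1 + Σ_{j=1}^{i-1}(1 − r_j) with r_j = 1{P_j ≤ α·γ_{t(j)}} defined recursively; consequently every hypothesis rejected by Alpha-Spending (P_i ≤ α·γ_i) is rejected by closed Alpha-Spending (P_i ≤ α·γ_{t(i)}). -/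
theorem one_add_sum_Ico_one_sub_le (b : ℕ → ℕ) {i : ℕ} (hi : 1 ≤ i) :
    1 + ∑ j ∈ Finset.Ico 1 i, (1 - b j) ≤ i :=
  calc 1 + ∑ j ∈ Finset.Ico 1 i, (1 - b j)
      ≤ 1 + ∑ _j ∈ Finset.Ico 1 i, 1 := by gcongr; omega
    _ = i := by rw [Finset.sum_const, Nat.card_Ico, smul_eq_mul, mul_one]; omega

open Classical in
theorem stmt11_general (α : ℝ) (hα : 0 < α ∧ α < 1) (γ : ℕ → ℝ)
    (hmono : Antitone γ) (P : ℕ → ℝ) (t : ℕ → ℕ)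
    (ht : ∀ i, t i = 1 + ∑ j ∈ Finset.Ico 1 i,
      (1 - (if P j ≤ α * γ (t j) then 1 else 0))) :
    ∀ i ≥ 1, α * γ i ≤ α * γ (t i) ∧ (P i ≤ α * γ i → P i ≤ α * γ (t i)) := by
  intro i hi
  have ht_le : t i ≤ i := (ht i).trans_le (one_add_sum_Ico_one_sub_le _ hi)
  have hlevel : α * γ i ≤ α * γ (t i) := mul_le_mul_of_nonneg_left (hmono ht_le) hα.1.le
  exact ⟨hlevel, fun hP => hP.trans hlevel⟩

open Classical in
theorem stmt11 (α : ℝ) (hα : 0 < α ∧ α < 1) (γ : ℕ → ℝ) (hγ : ∀ i, 0 ≤ γ i)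
    (hmono : Antitone γ) (hsum : ∑' i, γ i ≤ 1) (P : ℕ → ℝ) (t : ℕ → ℕ)
    (ht : ∀ i, t i = 1 + ∑ j ∈ Finset.Ico 1 i,
      (1 - (if P j ≤ α * γ (t j) then 1 else 0))) :
    ∀ i ≥ 1, α * γ i ≤ α * γ (t i) ∧ (P i ≤ α * γ i → P i ≤ α * γ (t i)) :=
  stmt11_general α hα γ hmono P t ht
end

section
/- In the closed ADDIS-Spending short-cut, any index k ≤ i − l_i − 1 that was rejected (P_k ≤ α_k) satisfies s_k = c_k = 1, i.e., P_k ≤ λ_k < τ_k, provided λ_k ≥ α·τ_k ≥ α_k. Consequently the short-cut level index t(i) = 1 + Σ_{j=1}^{i−l_i−1}(s_j − c_j) + Σ_{j=i−l_i}^{i−1}(1 − r_j) equals the closed-procedure count t_{I_i}(i) = 1 + |L_i ∩ I_i| + Σ_{j ≤ i−l_i−1, j∈I_i}(s_j − c_j), where I_i = {j < i : P_j > α_j} ∪ {i} and L_i = {i−l_i, ..., i−1}. -/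
open Classical in
theorem stmt16 (α : ℝ) (hα : 0 < α ∧ α < 1) (l : ℕ → ℕ) (τ lam P a : ℕ → ℝ)
    (hτ : ∀ i, 0 < τ i ∧ τ i ≤ 1) (hlam : ∀ i, α * τ i ≤ lam i ∧ lam i < τ i)
    (ha : ∀ i, a i ≤ α * τ i) (i : ℕ) (hi : 1 ≤ i) (hl : l i ≤ i - 1) :
    (∀ k, 1 ≤ k → k ≤ i - l i - 1 → P k ≤ a k → P k ≤ lam k ∧ lam k < τ k) ∧
    (1 + (∑ j ∈ Finset.Ico 1 (i - l i),
        ((if P j ≤ τ j then 1 else 0) - (if P j ≤ lam j then 1 else 0)))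
      + (∑ j ∈ Finset.Ico (i - l i) i, (1 - (if P j ≤ a j then 1 else 0)))
     = 1 + ((Finset.Ico (i - l i) i).filter (fun j => a j < P j ∨ j = i)).card
      + (∑ j ∈ Finset.Ico 1 (i - l i), (if a j < P j ∨ j = i then
          (if P j ≤ τ j then 1 else 0) - (if P j ≤ lam j then 1 else 0) else 0))) := by
  have key : ∀ k, 1 ≤ k → k ≤ i - l i - 1 → P k ≤ a k → P k ≤ lam k ∧ lam k < τ k := by
    intro k _ _ hPk
    exact ⟨le_trans hPk (le_trans (ha k) (hlam k).1), (hlam k).2⟩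
  refine ⟨key, ?_⟩
  rw [Finset.card_filter]
  push_cast
  rw [add_right_comm]
  congr 1
  · congr 1
    refine Finset.sum_congr rfl ?_
    intro j hj
    rw [Finset.mem_Ico] at hj
    by_cases h : P j ≤ a j
    · rw [if_pos h, if_neg (by push_neg; exact ⟨h, by omega⟩)]
    · rw [if_neg h, if_pos (Or.inl (lt_of_not_ge h))]
  · refine Finset.sum_congr rfl ?_
    intro j hj
    rw [Finset.mem_Ico] at hj
    by_cases h : a j < P j ∨ j = i
    · rw [if_pos h]
    · rw [if_neg h]
      push_neg at h
      obtain ⟨hle, hlt⟩ := key j hj.1 (by omega) h.1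
      rw [if_pos (le_trans hle hlt.le), if_pos hle]
end

section
/- The fixed-sequence characterization: suppose a predictable family of intersection tests based on p-value thresholds satisfies that for every finite I, Σ_{i∈I} α_i^I = α, and singleton tests reject iff P_i ≤ α. Then for any J ⊆ ℕ with min(J) = i, predictability (φ_{{i}} = 1 implies φ_J = 1) forces α_i^J = α and α_j^J = 0 for all j ∈ J \ {i}; the resulting closed procedure rejects H_i if and only if P_1 ≤ α, P_2 ≤ α, ..., P_i ≤ α. -/
/-!
Take `i = min J` and p-values equal to `α` at `i` and to `(1 + α) / 2` elsewhere. The singleton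
test `φ_{i}` rejects, so by predictability `φ_J` rejects; no threshold exceeds `α < (1 + α) / 2`,
so the rejection must come from `P_i = α ≤ α_i^J`. Hence `α_i^J = α`, and the budget constraint
leaves nothing for the other indices. Consequently `φ_K` rejects iff `P_{min K} ≤ α`, and every
`K ∋ i` is rejected iff `P_j ≤ α` for all `j ≤ i`: for `⇒` test `K = {j, i}`; for `⇐` reject
`K ∩ [0, i]` and extend it by predictability to the later indices of `K`.
-/

open Finset

lemma Finset.eq_zero_of_sum_eq_of_nonneg {ι M : Type*} [DecidableEq ι] [AddCommMonoid M]
    [PartialOrder M] [IsOrderedCancelAddMonoid M] {s : Finset ι} {f : ι → M} {i j : ι}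
    (hf : ∀ k ∈ s, 0 ≤ f k) (hi : i ∈ s) (hsum : ∑ k ∈ s, f k = f i) (hj : j ∈ s)
    (hji : j ≠ i) : f j = 0 := by
  rw [← add_sum_erase s f hi, add_eq_left] at hsum
  exact (sum_eq_zero_iff_of_nonneg fun k hk => hf k (mem_of_mem_erase hk)).mp hsum j
    (mem_erase.mpr ⟨hji, hj⟩)

/-- The intersection test `φ_I` with thresholds `a I i = α_i^I`. -/
def Rejects (a : Set ℕ → ℕ → ℝ) (P : ℕ → ℝ) (I : Set ℕ) : Prop :=
  ∃ k ∈ I, P k ≤ a I k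

def IsPredictable (a : Set ℕ → ℕ → ℝ) : Prop :=
  ∀ P : ℕ → ℝ, (∀ j, 0 < P j ∧ P j < 1) →
    ∀ (i : ℕ) (I : Set ℕ), (∀ j ∈ I, j ≤ i) → ∀ J : Set ℕ, (∀ j ∈ J, i < j) →
      Rejects a P I → Rejects a P (I ∪ J)

structure IsThresholdFamily (α : ℝ) (a : Set ℕ → ℕ → ℝ) : Prop where
  mem_Icc : ∀ (I : Set ℕ) (i : ℕ), i ∈ I → 0 ≤ a I i ∧ a I i ≤ α
  sum_eq : ∀ I : Finset ℕ, I.Nonempty → ∑ i ∈ I, a I i = α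

namespace IsThresholdFamily

variable {α : ℝ} {a : Set ℕ → ℕ → ℝ}

lemma apply_singleton (ha : IsThresholdFamily α a) (i : ℕ) : a {i} i = α := by
  simpa using ha.sum_eq {i} (singleton_nonempty i)

lemma apply_min (ha : IsThresholdFamily α a) (hα : 0 < α ∧ α < 1) (hpred : IsPredictable a)
    {J : Finset ℕ} {i : ℕ} (hi : i ∈ J) (hmin : ∀ j ∈ J, i ≤ j) : a J i = α := by
  set P : ℕ → ℝ := fun j => if j = i then α else (1 + α) / 2
  have hP : ∀ j, 0 < P j ∧ P j < 1 := by
    intro j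
    simp only [P]
    split_ifs <;> constructor <;> linarith
  have hrej : Rejects a P ({i} ∪ (↑J \ {i})) :=
    hpred P hP i {i} (fun j hj => hj.le) (↑J \ {i})
      (fun j hj => (hmin j hj.1).lt_of_ne (Ne.symm hj.2))
      ⟨i, rfl, by simp [P, ha.apply_singleton]⟩
  rw [Set.singleton_union, Set.insert_sdiff_singleton, Set.insert_eq_of_mem (mem_coe.mpr hi)]
    at hrej
  obtain ⟨k, hk, hle⟩ := hrej
  have hak := (ha.mem_Icc _ k hk).2
  obtain rfl : k = i := by
    by_contra hki
    simp only [P, hki, if_false] at hle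
    linarith
  exact le_antisymm hak (by simpa [P] using hle)

lemma apply_eq_zero_of_ne_min (ha : IsThresholdFamily α a) (hα : 0 < α ∧ α < 1)
    (hpred : IsPredictable a) {J : Finset ℕ} {i j : ℕ} (hi : i ∈ J) (hmin : ∀ j ∈ J, i ≤ j)
    (hj : j ∈ J) (hji : j ≠ i) : a J j = 0 :=
  eq_zero_of_sum_eq_of_nonneg (fun k hk => (ha.mem_Icc _ k hk).1) hi
    ((ha.sum_eq J ⟨i, hi⟩).trans (ha.apply_min hα hpred hi hmin).symm) hj hji

lemma rejects_iff_le_of_min (ha : IsThresholdFamily α a) (hα : 0 < α ∧ α < 1)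
    (hpred : IsPredictable a)
    {P : ℕ → ℝ} (hP : ∀ j, 0 < P j) {J : Finset ℕ} {i : ℕ} (hi : i ∈ J)
    (hmin : ∀ j ∈ J, i ≤ j) : Rejects a P J ↔ P i ≤ α := by
  rw [← ha.apply_min hα hpred hi hmin]
  refine ⟨fun ⟨k, hk, hle⟩ => ?_, fun h => ⟨i, hi, h⟩⟩
  by_cases hki : k = i
  · rwa [hki] at hle
  · rw [ha.apply_eq_zero_of_ne_min hα hpred hi hmin hk hki] at hle
    exact absurd hle (hP k).not_ge

lemma rejects_forall_iff (ha : IsThresholdFamily α a) (hα : 0 < α ∧ α < 1)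
    (hpred : IsPredictable a) {P : ℕ → ℝ} (hP : ∀ j, 0 < P j ∧ P j < 1) (i : ℕ) :
    (∀ K : Set ℕ, i ∈ K → Rejects a P K) ↔ ∀ j ≤ i, P j ≤ α := by
  have hP₀ j := (hP j).1
  constructor
  · intro h j hji
    refine (ha.rejects_iff_le_of_min hα hpred hP₀ (mem_insert_self j {i}) ?_).mp
      (h _ (by simp))
    simpa using hji
  · intro h K hiK
    classical
    set F : Finset ℕ := {j ∈ Iic i | j ∈ K}
    have hiF : i ∈ F := mem_filter.mpr ⟨mem_Iic.mpr le_rfl, hiK⟩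
    have hF_le : ∀ j ∈ F, j ≤ i := fun j hj => mem_Iic.mp (mem_filter.mp hj).1
    have hF : Rejects a P F :=
      (ha.rejects_iff_le_of_min hα hpred hP₀ (F.min'_mem ⟨i, hiF⟩) F.min'_le).mpr
        (h _ (F.min'_le i hiF))
    have hK : (F : Set ℕ) ∪ {j | j ∈ K ∧ i < j} = K := by
      ext x
      simp only [F, coe_filter, mem_Iic, Set.mem_union, Set.mem_ofPred_eq]
      constructor
      · rintro (⟨-, hx⟩ | ⟨hx, -⟩) <;> exact hx
      · intro hx
        exact (le_or_gt x i).imp (fun hxi => ⟨hxi, hx⟩) fun hix => ⟨hx, hix⟩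
    rw [← hK]
    exact hpred P hP i F hF_le _ (fun j hj => hj.2) hF

end IsThresholdFamily

theorem stmt18_general (α : ℝ) (hα : 0 < α ∧ α < 1) (a : Set ℕ → ℕ → ℝ)
    (hrange : ∀ (I : Set ℕ) (i : ℕ), i ∈ I → 0 ≤ a I i ∧ a I i ≤ α)
    (hsum : ∀ I : Finset ℕ, I.Nonempty → ∑ i ∈ I, a (↑I) i = α)
    (hpred : ∀ P : ℕ → ℝ, (∀ j, 0 < P j ∧ P j < 1) →
      ∀ (i : ℕ) (I : Set ℕ), (∀ j ∈ I, j ≤ i) → ∀ J : Set ℕ, (∀ j ∈ J, i < j) →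
        (∃ k ∈ I, P k ≤ a I k) → ∃ k ∈ I ∪ J, P k ≤ a (I ∪ J) k) :
    (∀ (J : Finset ℕ) (i : ℕ), i ∈ J → (∀ j ∈ J, i ≤ j) →
      a (↑J) i = α ∧ ∀ j ∈ J, j ≠ i → a (↑J) j = 0) ∧
    (∀ P : ℕ → ℝ, (∀ j, 0 < P j ∧ P j < 1) → ∀ i : ℕ,
      ((∀ K : Set ℕ, i ∈ K → ∃ k ∈ K, P k ≤ a K k) ↔ ∀ j ≤ i, P j ≤ α)) := by
  have ha : IsThresholdFamily α a := ⟨hrange, hsum⟩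
  exact ⟨fun J i hi hmin => ⟨ha.apply_min hα hpred hi hmin,
      fun j hj hji => ha.apply_eq_zero_of_ne_min hα hpred hi hmin hj hji⟩,
    fun P hP i => ha.rejects_forall_iff hα hpred hP i⟩

theorem stmt18 (α : ℝ) (hα : 0 < α ∧ α < 1) (a : Set ℕ → ℕ → ℝ)
    (hrange : ∀ (I : Set ℕ) (i : ℕ), i ∈ I → 0 ≤ a I i ∧ a I i ≤ α)
    (hsum : ∀ I : Finset ℕ, I.Nonempty → ∑ i ∈ I, a (↑I) i = α)
    (hsing : ∀ i : ℕ, a {i} i = α)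
    (hpred : ∀ P : ℕ → ℝ, (∀ j, 0 < P j ∧ P j < 1) →
      ∀ (i : ℕ) (I : Set ℕ), (∀ j ∈ I, j ≤ i) → ∀ J : Set ℕ, (∀ j ∈ J, i < j) →
        (∃ k ∈ I, P k ≤ a I k) → ∃ k ∈ I ∪ J, P k ≤ a (I ∪ J) k) :
    (∀ (J : Finset ℕ) (i : ℕ), i ∈ J → (∀ j ∈ J, i ≤ j) →
      a (↑J) i = α ∧ ∀ j ∈ J, j ≠ i → a (↑J) j = 0) ∧
    (∀ P : ℕ → ℝ, (∀ j, 0 < P j ∧ P j < 1) → ∀ i : ℕ,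
      ((∀ K : Set ℕ, i ∈ K → ∃ k ∈ K, P k ≤ a K k) ↔ ∀ j ≤ i, P j ≤ α)) :=
  stmt18_general α hα a hrange hsum hpred
end
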